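/- Let v ∈ H^1_per with v(0) = 0, and for q ∈ ℝ define v_q(x) := v(x) e^{−iq[x]}, where [x] = x mod 2π. Then v_q ∈ H^1_per, ‖v_q‖_{L²_per} = ‖v‖_{L²_per}, and ∫_Γ |(−i d/dx + q)v_q|² = ∫_Γ |v'|². -/

import Mathlib

open MeasureTheory Real

/-- `[x] = x mod 2π`. -/
noncomputable def modTwoPi (x : ℝ) : ℝ := x - 2 * π * ⌊x / (2 * π)⌋

/-- The twisted function `v_q(x) = v(x) e^{-i q [x]}`. -/
noncomputable def twist (v : ℝ → ℂ) (q : ℝ) : ℝ → ℂ :=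
  fun x => v x * Complex.exp (-Complex.I * q * modTwoPi x)

/-!
Off the lattice `2πℤ` the map `x ↦ [x]` is locally `x ↦ x - c`, so there `v_q` is the gauge
transform `v(x) e^{-iq(x - c)}`, which conjugates `-i d/dx + q` into `-i d/dx`; the unimodular
factor does not change pointwise moduli. The jumps of `[x]` lie in the null set `2πℤ`, where the
periodic `v` vanishes, so `v_q` stays continuous.
-/

open Filter Topology AddCommGroup

lemma modTwoPi_eq_toIcoMod (x : ℝ) : modTwoPi x = toIcoMod two_pi_pos 0 x := by
  rw [toIcoMod, toIcoDiv_eq_floor, modTwoPi, zsmul_eq_mul, sub_zero, mul_comm]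

lemma modTwoPi_periodic : Function.Periodic modTwoPi (2 * π) := fun x => by
  simp only [modTwoPi_eq_toIcoMod, toIcoMod_add_right]

lemma continuousAt_modTwoPi {x : ℝ} (hx : ¬x ≡ 0 [PMOD 2 * π]) : ContinuousAt modTwoPi x := by
  simpa only [funext modTwoPi_eq_toIcoMod] using continuousAt_toIcoMod two_pi_pos 0 hx

lemma modTwoPi_eventuallyEq_sub_const {x : ℝ} (hx : ¬x ≡ 0 [PMOD 2 * π]) :
    modTwoPi =ᶠ[𝓝 x] fun y => y - (x - modTwoPi x) := by
  filter_upwards [eventuallyEq_toIcoDiv_nhds two_pi_pos 0 hx] with y hy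
  simp only [modTwoPi_eq_toIcoMod, toIcoMod, hy]
  ring

lemma ae_not_modEq_zero {p : ℝ} : ∀ᵐ x : ℝ, ¬x ≡ 0 [PMOD p] := by
  refine ((Set.countable_range fun z : ℤ => z • p).mono ?_).ae_notMem volume
  intro x hx
  obtain ⟨z, rfl⟩ := modEq_zero_iff_eq_zsmul.mp hx
  exact ⟨z, rfl⟩

lemma Function.Periodic.eq_of_modEq_zero {G α : Type*} [AddCommGroup G] {f : G → α} {p x : G}
    (hf : Function.Periodic f p) (hx : x ≡ 0 [PMOD p]) : f x = f 0 := by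
  obtain ⟨z, rfl⟩ := modEq_zero_iff_eq_zsmul.mp hx
  exact hf.zsmul_eq z

lemma hasDerivAt_mul_cexp_gauge {v : ℝ → ℂ} {v' : ℂ} {x : ℝ} (hv : HasDerivAt v v' x)
    (q c : ℝ) :
    HasDerivAt (fun y => v y * Complex.exp (-Complex.I * q * (y - c : ℝ)))
      ((v' - Complex.I * q * v x) * Complex.exp (-Complex.I * q * (x - c : ℝ))) x := by
  have hphase : HasDerivAt (fun y : ℝ => -Complex.I * q * (y - c : ℝ)) (-Complex.I * q) x := by
    simpa using (((hasDerivAt_id x).sub_const c).ofReal_comp).const_mul (-Complex.I * q)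
  exact (hv.fun_mul hphase.cexp).congr_deriv (by ring)

lemma norm_twist (v : ℝ → ℂ) (q x : ℝ) : ‖twist v q x‖ = ‖v x‖ := by
  simp [twist, Complex.norm_exp]

section Twist

variable {v : ℝ → ℂ} {q x : ℝ}

lemma twist_periodic (hv : Function.Periodic v (2 * π)) : Function.Periodic (twist v q) (2 * π) :=
  fun x => by simp only [twist, hv x, modTwoPi_periodic x]

lemma continuousAt_twist (hv : ContinuousAt v x) (hvx : x ≡ 0 [PMOD 2 * π] → v x = 0) :
    ContinuousAt (twist v q) x := by
  by_cases hx : x ≡ 0 [PMOD 2 * π]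
  · have hlim : Tendsto (fun y => ‖v y‖) (𝓝 x) (𝓝 0) := by
      simpa [hvx hx] using hv.tendsto.norm
    rw [ContinuousAt, twist, hvx hx, zero_mul]
    exact squeeze_zero_norm (fun y => (norm_twist v q y).le) hlim
  · exact hv.mul ((continuousAt_const.mul
      (Complex.continuous_ofReal.continuousAt.comp (continuousAt_modTwoPi hx))).cexp)

lemma hasDerivAt_twist {v' : ℂ} (hv : HasDerivAt v v' x) (hx : ¬x ≡ 0 [PMOD 2 * π]) :
    HasDerivAt (twist v q)
      ((v' - Complex.I * q * v x) * Complex.exp (-Complex.I * q * modTwoPi x)) x := by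
  have hgauge := hasDerivAt_mul_cexp_gauge hv q (x - modTwoPi x)
  rw [sub_sub_cancel] at hgauge
  refine hgauge.congr_of_eventuallyEq ?_
  filter_upwards [modTwoPi_eventuallyEq_sub_const hx] with y hy
  simp only [twist, hy]

lemma norm_neg_I_mul_deriv_twist_add (hv : DifferentiableAt ℝ v x) (hx : ¬x ≡ 0 [PMOD 2 * π]) :
    ‖-Complex.I * deriv (twist v q) x + q * twist v q x‖ = ‖deriv v x‖ := by
  rw [(hasDerivAt_twist hv.hasDerivAt hx).deriv, twist]
  set e := Complex.exp (-Complex.I * q * modTwoPi x)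
  have hI : -Complex.I * ((deriv v x - Complex.I * q * v x) * e) + q * (v x * e)
      = -Complex.I * deriv v x * e := by
    linear_combination (q * v x * e) * Complex.I_sq
  rw [hI, norm_mul, norm_mul, Complex.norm_exp]
  simp

end Twist

/-- If `v ∈ H^1_per` with `v(0) = 0`, then `v_q(x) = v(x) e^{-iq[x]}` lies in `H^1_per`
(it is continuous and `2π`-periodic), has the same `L²_per` norm as `v`, and
`∫_Γ |(-i d/dx + q) v_q|² = ∫_Γ |v'|²`. -/
theorem stmt10 (v : ℝ → ℂ) (q : ℝ)
    (hv : Differentiable ℝ v) (hvper : Function.Periodic v (2 * π)) (hv0 : v 0 = 0) :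
    Continuous (twist v q) ∧ Function.Periodic (twist v q) (2 * π) ∧
    (∫ x in Set.Ico (-π) π, ‖twist v q x‖ ^ 2) = (∫ x in Set.Ico (-π) π, ‖v x‖ ^ 2) ∧
    (∫ x in Set.Ico (-π) π, ‖(-Complex.I) * deriv (twist v q) x + (q : ℂ) * twist v q x‖ ^ 2)
      = ∫ x in Set.Ico (-π) π, ‖deriv v x‖ ^ 2 := by
  refine ⟨?_, twist_periodic hvper, by simp only [norm_twist], ?_⟩
  · exact continuous_iff_continuousAt.mpr fun x =>
      continuousAt_twist hv.continuous.continuousAt fun hx => (hvper.eq_of_modEq_zero hx).trans hv0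
  · refine integral_congr_ae (ae_restrict_of_ae ?_)
    filter_upwards [ae_not_modEq_zero] with x hx
    rw [norm_neg_I_mul_deriv_twist_add (hv x) hx]
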